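/- Let r ≥ 1 and let s, t ≥ 0 be real numbers. If G is an n-vertex graph with e(G) ≥ (1 − 1/r)·n²/2 − t, and V(G) = V_1 ∪ … ∪ V_r is a partition of its vertex set such that the total number of edges inside the parts satisfies Σ_{i=1}^r e(V_i) ≤ s, then for each i ∈ {1,…,r} one has n/r − √(2(s+t)) ≤ |V_i| ≤ n/r + √(2(s+t)). -/

import Mathlib

open SimpleGraph

open Classical in
/-- The spectral radius (largest adjacency eigenvalue) of a finite simple graph. -/
noncomputable def specRad {V : Type*} [Fintype V] [DecidableEq V] (G : SimpleGraph V) : ℝ :=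
  sSup (spectrum ℝ (G.adjMatrix ℝ))

/-- The number of copies of `F` in `G`, i.e. the number of subgraphs of `G` isomorphic to `F`. -/
noncomputable def copiesCount {W V : Type*} (F : SimpleGraph W) (G : SimpleGraph V) : ℕ :=
  Nat.card {H : G.Subgraph // Nonempty (H.coe ≃g F)}

/-- A graph is color-critical if it has an edge whose deletion decreases the chromatic number. -/
def IsColorCritical {W : Type*} (F : SimpleGraph W) : Prop :=
  ∃ e ∈ F.edgeSet, (F.deleteEdges {e}).chromaticNumber < F.chromaticNumber

/-- `G` belongs to the family `𝒯_{n,r,q}` of graphs obtained from the Turán graph `T_{n,r}`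
by adding `q` new edges. -/
def InTuranPlus (n r q : ℕ) (G : SimpleGraph (Fin n)) : Prop :=
  turanGraph n r ≤ G ∧
    Nat.card (G.edgeSet \ (turanGraph n r).edgeSet : Set (Sym2 (Fin n))) = q

/-- `c(n,F)`: the minimum number of copies of `F` in a graph obtained from `T_{n,r}` by
adding a single edge. -/
noncomputable def cMin (n r : ℕ) {W : Type*} (F : SimpleGraph W) : ℕ :=
  sInf {m : ℕ | ∃ G : SimpleGraph (Fin n), InTuranPlus n r 1 G ∧ copiesCount F G = m}

/-- The `i`-th part of the Turán graph `turanGraph n r` (the residue class of `i` mod `r`). -/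
def turanPart (n r i : ℕ) : Finset (Fin n) :=
  Finset.univ.filter (fun v => (v : ℕ) % r = i)

/-- `D` is a matching with `q` edges whose vertices lie inside `P`. -/
def IsMatchingOn {V : Type*} (q : ℕ) (D : SimpleGraph V) (P : Set V) : Prop :=
  D.support ⊆ P ∧ Nat.card D.edgeSet = q ∧
    ∀ v : V, {w : V | D.Adj v w}.Subsingleton

/-- `D` is a triangle whose vertices lie inside `P`. -/
def IsTriangleOn {V : Type*} (D : SimpleGraph V) (P : Set V) : Prop :=
  ∃ a b c : V, a ≠ b ∧ a ≠ c ∧ b ≠ c ∧ ({a, b, c} : Set V) ⊆ P ∧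
    D = fromEdgeSet {s(a, b), s(a, c), s(b, c)}

/-- `D` is a star with `q` edges whose vertices lie inside `P`. -/
def IsStarOn {V : Type*} (q : ℕ) (D : SimpleGraph V) (P : Set V) : Prop :=
  ∃ (v : V) (S : Finset V), v ∉ S ∧ S.card = q ∧ insert v (S : Set V) ⊆ P ∧
    D = fromEdgeSet {e : Sym2 V | ∃ u ∈ S, e = s(v, u)}

/-- `H` is (a copy of) `Y_{n,r,q}`: obtained from `T_{n,r}` by adding a matching with `q`
edges inside a largest part. -/
def IsYGraph (n r q : ℕ) (H : SimpleGraph (Fin n)) : Prop :=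
  turanGraph n r ≤ H ∧
    ∃ i < r, (∀ j < r, (turanPart n r j).card ≤ (turanPart n r i).card) ∧
      IsMatchingOn q (H \ turanGraph n r) (turanPart n r i : Set (Fin n))

/-- `H` is (a copy of) `L_{n,r,q}`: obtained from `T_{n,r}` by adding, inside a smallest
part, a triangle if `q = 3` and a star with `q` edges otherwise. -/
def IsLGraph (n r q : ℕ) (H : SimpleGraph (Fin n)) : Prop :=
  turanGraph n r ≤ H ∧
    ∃ i < r, (∀ j < r, (turanPart n r i).card ≤ (turanPart n r j).card) ∧
      (if q = 3 then IsTriangleOn (H \ turanGraph n r) (turanPart n r i : Set (Fin n))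
       else IsStarOn q (H \ turanGraph n r) (turanPart n r i : Set (Fin n)))

/-- `H` is (a copy of) `T_{n,r,q}`: obtained from `T_{n,r}` by adding a star with `q`
edges inside a largest part. -/
def IsTStarGraph (n r q : ℕ) (H : SimpleGraph (Fin n)) : Prop :=
  turanGraph n r ≤ H ∧
    ∃ i < r, (∀ j < r, (turanPart n r j).card ≤ (turanPart n r i).card) ∧
      IsStarOn q (H \ turanGraph n r) (turanPart n r i : Set (Fin n))

/-- The size of the `i`-th part of the partition `p`. -/
def partSize {n r : ℕ} (p : Fin n → Fin r) (i : Fin r) : ℕ :=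
  (Finset.univ.filter (fun v => p v = i)).card

/-- The complete multipartite graph determined by the partition `p`. -/
def multipartite {n r : ℕ} (p : Fin n → Fin r) : SimpleGraph (Fin n) where
  Adj u v := p u ≠ p v
  symm := ⟨fun _ _ h => Ne.symm h⟩
  loopless := ⟨fun _ h => h rfl⟩

/-- `G` is obtained from the complete multipartite graph of `p` by adding `α₁` class-edges
and deleting `α₂` cross-edges. -/
def ObtainedFrom {n r : ℕ} (p : Fin n → Fin r) (G : SimpleGraph (Fin n)) (α₁ α₂ : ℕ) : Prop :=
  Nat.card (G.edgeSet \ (multipartite p).edgeSet : Set (Sym2 (Fin n))) = α₁ ∧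
    Nat.card ((multipartite p).edgeSet \ G.edgeSet : Set (Sym2 (Fin n))) = α₂

/-- An edge is a class-edge (w.r.t. the partition `p`) if both endpoints lie in one part. -/
def IsClassEdge {n r : ℕ} (p : Fin n → Fin r) (e : Sym2 (Fin n)) : Prop :=
  ∀ u ∈ e, ∀ v ∈ e, p u = p v

/-- The number of edges of `G` inside the `i`-th part of `p`. -/
noncomputable def edgesInside {n r : ℕ} (G : SimpleGraph (Fin n)) (p : Fin n → Fin r)
    (i : Fin r) : ℕ :=
  Nat.card {e : Sym2 (Fin n) | e ∈ G.edgeSet ∧ ∀ v ∈ e, p v = i}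

/-- The `F`-covering number: minimum size of a vertex set meeting every copy of `F` in `G`. -/
noncomputable def coveringNumber {V W : Type*} [Fintype V] (F : SimpleGraph W)
    (G : SimpleGraph V) : ℕ :=
  sInf {k : ℕ | ∃ S : Finset V, S.card = k ∧
    ∀ H : G.Subgraph, Nonempty (H.coe ≃g F) → ∃ v ∈ S, v ∈ H.verts}

/-!
The edges of `G` between different parts number at most the `(n² - ∑ |V_i|²) / 2` pairs of
vertices in different parts, so `∑ |V_i|² ≤ n² / r + 2 (s + t)`. The left side minus `n² / r`
is `∑ (|V_i| - n / r)²`, which dominates each single term `(|V_i| - n / r)²`.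
-/

lemma sq_sub_mean_le_sum_sq_sub {ι : Type*} [Fintype ι] (x : ι → ℝ) (i : ι) :
    (x i - (∑ j, x j) / Fintype.card ι) ^ 2 ≤
      ∑ j, x j ^ 2 - (∑ j, x j) ^ 2 / Fintype.card ι := by
  set m := (∑ j, x j) / Fintype.card ι
  have hcard : (Fintype.card ι : ℝ) ≠ 0 := by exact_mod_cast (Fintype.card_pos_iff.2 ⟨i⟩).ne'
  have hvar : ∑ j, (x j - m) ^ 2 = ∑ j, x j ^ 2 - (∑ j, x j) ^ 2 / Fintype.card ι := by
    simp only [sub_sq, Finset.sum_add_distrib, Finset.sum_sub_distrib, ← Finset.sum_mul,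
      ← Finset.mul_sum, Finset.sum_const, Finset.card_univ, nsmul_eq_mul, m]
    field_simp
    ring
  rw [← hvar]
  exact Finset.single_le_sum (f := fun j => (x j - m) ^ 2) (fun _ _ => sq_nonneg _)
    (Finset.mem_univ i)

section Partition

variable {n r : ℕ} (p : Fin n → Fin r)

instance : DecidableRel (multipartite p).Adj :=
  fun u v => inferInstanceAs (Decidable (p u ≠ p v))

lemma sum_partSize : ∑ i, partSize p i = n := by
  simpa [partSize] using (Finset.card_eq_sum_card_fiberwise (s := Finset.univ)
    (t := Finset.univ) (fun v _ => Finset.mem_univ (p v))).symm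

lemma degree_multipartite_add_partSize (v : Fin n) :
    (multipartite p).degree v + partSize p (p v) = n := by
  have hnbr : (multipartite p).neighborFinset v = Finset.univ.filter (fun w => p w ≠ p v) := by
    ext w
    rw [mem_neighborFinset, Finset.mem_filter]
    simpa [multipartite] using ne_comm
  rw [← card_neighborFinset_eq_degree, hnbr, partSize, add_comm,
    Finset.card_filter_add_card_filter_not, Finset.card_univ, Fintype.card_fin]

lemma two_mul_card_edgeFinset_multipartite_add_sum_sq_partSize :
    2 * (multipartite p).edgeFinset.card + ∑ i, partSize p i ^ 2 = n ^ 2 := by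
  have hfiber : ∑ v, partSize p (p v) = ∑ i, partSize p i ^ 2 := by
    rw [← Finset.sum_fiberwise' Finset.univ p (partSize p)]
    simp [partSize, sq]
  rw [← sum_degrees_eq_twice_card_edges, ← hfiber, ← Finset.sum_add_distrib]
  simp [degree_multipartite_add_partSize, sq]

lemma edgesInside_eq_card_filter (G : SimpleGraph (Fin n)) [DecidableRel G.Adj] (i : Fin r) :
    edgesInside G p i = (G.edgeFinset.filter fun e => ∀ v ∈ e, p v = i).card := by
  rw [edgesInside, Nat.card_coe_set_eq, ← Set.ncard_coe_finset]
  congr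
  ext e
  simp

lemma card_edgeFinset_le_multipartite_add_sum_edgesInside (G : SimpleGraph (Fin n))
    [DecidableRel G.Adj] :
    G.edgeFinset.card ≤ (multipartite p).edgeFinset.card + ∑ i, edgesInside G p i := by
  rw [← Finset.card_filter_add_card_filter_not (s := G.edgeFinset)
    (p := (· ∈ (multipartite p).edgeFinset))]
  gcongr
  · exact fun e he => (Finset.mem_filter.1 he).2
  · simp_rw [edgesInside_eq_card_filter]
    refine (Finset.card_le_card fun e he => ?_).trans Finset.card_biUnion_le
    obtain ⟨heG, hnot_cross⟩ := Finset.mem_filter.1 he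
    induction e using Sym2.ind with
    | h u v =>
      have huv : p u = p v := by
        rw [mem_edgeFinset, mem_edgeSet] at hnot_cross
        exact not_not.1 hnot_cross
      refine Finset.mem_biUnion.2 ⟨p u, Finset.mem_univ _, Finset.mem_filter.2 ⟨heG, ?_⟩⟩
      rintro w hw
      rcases Sym2.mem_iff.1 hw with rfl | rfl
      exacts [rfl, huv.symm]

lemma two_mul_card_edgeSet_add_sum_sq_partSize_le (G : SimpleGraph (Fin n)) :
    2 * Nat.card G.edgeSet + ∑ i, partSize p i ^ 2 ≤ n ^ 2 + 2 * ∑ i, edgesInside G p i := by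
  classical
  have hcross := card_edgeFinset_le_multipartite_add_sum_edgesInside p G
  have hcomplete := two_mul_card_edgeFinset_multipartite_add_sum_sq_partSize p
  rw [Nat.card_eq_fintype_card, ← edgeFinset_card]
  omega

end Partition

theorem statement9_general (r : ℕ) (s t : ℝ)
    (n : ℕ) (G : SimpleGraph (Fin n)) (p : Fin n → Fin r)
    (he : (1 - 1 / (r : ℝ)) * (n : ℝ) ^ 2 / 2 - t ≤ (Nat.card G.edgeSet : ℝ))
    (hin : (∑ i : Fin r, (edgesInside G p i : ℝ)) ≤ s) :
    ∀ i : Fin r,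
      (n : ℝ) / r - Real.sqrt (2 * (s + t)) ≤ (partSize p i : ℝ) ∧
      (partSize p i : ℝ) ≤ (n : ℝ) / r + Real.sqrt (2 * (s + t)) := by
  intro i
  have hcount : 2 * (Nat.card G.edgeSet : ℝ) + ∑ j, (partSize p j : ℝ) ^ 2 ≤
      (n : ℝ) ^ 2 + 2 * ∑ j, (edgesInside G p j : ℝ) := by
    exact_mod_cast two_mul_card_edgeSet_add_sum_sq_partSize_le p G
  have hmean := sq_sub_mean_le_sum_sq_sub (fun j => (partSize p j : ℝ)) i
  rw [Fintype.card_fin, ← Nat.cast_sum, sum_partSize] at hmean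
  have hdev : ((partSize p i : ℝ) - n / r) ^ 2 ≤ 2 * (s + t) := by
    have hturan : (1 - 1 / (r : ℝ)) * (n : ℝ) ^ 2 / 2 = (n : ℝ) ^ 2 / 2 - (n : ℝ) ^ 2 / r / 2 := by ring
    linarith
  have := abs_le.1 (Real.abs_le_sqrt hdev)
  constructor <;> linarith

/-- Lemma 2.6 / `lem-BC`. Part sizes of an almost extremal graph with a
partition having few internal edges are nearly balanced. -/
theorem statement9 (r : ℕ) (hr : 1 ≤ r) (s t : ℝ) (hs : 0 ≤ s) (ht : 0 ≤ t)
    (n : ℕ) (G : SimpleGraph (Fin n)) (p : Fin n → Fin r)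
    (he : (1 - 1 / (r : ℝ)) * (n : ℝ) ^ 2 / 2 - t ≤ (Nat.card G.edgeSet : ℝ))
    (hin : (∑ i : Fin r, (edgesInside G p i : ℝ)) ≤ s) :
    ∀ i : Fin r,
      (n : ℝ) / r - Real.sqrt (2 * (s + t)) ≤ (partSize p i : ℝ) ∧
      (partSize p i : ℝ) ≤ (n : ℝ) / r + Real.sqrt (2 * (s + t)) :=
  statement9_general r s t n G p he hin
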